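/- Let φ be a Lagrangian invariant (dφ/dt := ∂φ/∂t + v ⋅ ∇φ = 0) of a divergence-free velocity field v on M ⊆ ℝ³, let ρ be a smooth nonvanishing function conserved along ∂_t + v, and let h be a smooth function with dh/dt = 0. Then the time-dependent vector field W = ρ⁻¹ (∇φ × ∇h) ⋅ ∇ on M commutes with ∂_t + v and is divergence-free with respect to the volume density ρ dx∧dy∧dz, i.e. the ρ-weighted divergence of W vanishes. -/

import Mathlib

open Matrix

/-- The `i`-th standard basis vector of ℝ³. -/
noncomputable def e (i : Fin 3) : Fin 3 → ℝ := Pi.single i 1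

/-- Divergence ∇ ⋅ u of a vector field on ℝ³. -/
noncomputable def div3 (u : (Fin 3 → ℝ) → (Fin 3 → ℝ)) (x : Fin 3 → ℝ) : ℝ :=
  ∑ i, fderiv ℝ (fun y => u y i) x (e i)

/-- Time-extended space I × M ⊆ ℝ × ℝ³. -/
abbrev P : Type := ℝ × (Fin 3 → ℝ)

/-- Lie bracket of vector fields on the time-extended space ℝ × ℝ³. -/
noncomputable def lieBracketP (F G : P → P) (p : P) : P :=
  fderiv ℝ G p (F p) - fderiv ℝ F p (G p)

/-- Spatial gradient ∇f of a time-dependent scalar function. -/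
noncomputable def gradx (f : P → ℝ) (p : P) : Fin 3 → ℝ :=
  fun i => fderiv ℝ (fun y => f (p.1, y)) p.2 (e i)

section Aux
variable {E : Type*} [NormedAddCommGroup E] [NormedSpace ℝ E]

theorem hasFDerivAt_fderiv_apply (f : E → ℝ) (hf : ContDiff ℝ (⊤ : ℕ∞) f) (x u : E) :
    HasFDerivAt (fun q => fderiv ℝ f q u) ((fderiv ℝ (fderiv ℝ f) x).flip u) x := by
  have hf' : ContDiff ℝ (⊤ : ℕ∞) (fderiv ℝ f) := hf.fderiv_right (by simp)
  have hd2 : HasFDerivAt (fderiv ℝ f) (fderiv ℝ (fderiv ℝ f) x) x :=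
    (hf'.differentiable (by simp) x).hasFDerivAt
  simpa using hd2.clm_apply (hasFDerivAt_const u x)

theorem contDiff_fderiv_apply (f : E → ℝ) (hf : ContDiff ℝ (⊤ : ℕ∞) f) (u : E) :
    ContDiff ℝ (⊤ : ℕ∞) (fun q => fderiv ℝ f q u) :=
  (hf.fderiv_right (by simp)).clm_apply contDiff_const

theorem symm2 (f : E → ℝ) (hf : ContDiff ℝ (⊤ : ℕ∞) f) (x u w : E) :
    fderiv ℝ (fun q => fderiv ℝ f q u) x w = fderiv ℝ (fun q => fderiv ℝ f q w) x u := by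
  have hd : ∀ y, HasFDerivAt f (fderiv ℝ f y) y := fun y =>
    (hf.differentiable (by simp) y).hasFDerivAt
  have hd2 : HasFDerivAt (fderiv ℝ f) (fderiv ℝ (fderiv ℝ f) x) x :=
    ((hf.fderiv_right (m := (⊤ : ℕ∞)) (by simp)).differentiable (by simp) x).hasFDerivAt
  rw [(hasFDerivAt_fderiv_apply f hf x u).fderiv, (hasFDerivAt_fderiv_apply f hf x w).fderiv]
  simpa using second_derivative_symmetric hd hd2 w u

theorem fderiv_cross (f g : E → ℝ) (hf : ContDiff ℝ (⊤ : ℕ∞) f) (hg : ContDiff ℝ (⊤ : ℕ∞) g)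
    (x u d₁ d₂ : E) :
    fderiv ℝ (fun y => fderiv ℝ f y d₁ * fderiv ℝ g y d₂
        - fderiv ℝ f y d₂ * fderiv ℝ g y d₁) x u
      = fderiv ℝ (fun y => fderiv ℝ f y d₁) x u * fderiv ℝ g x d₂
        + fderiv ℝ f x d₁ * fderiv ℝ (fun y => fderiv ℝ g y d₂) x u
        - fderiv ℝ (fun y => fderiv ℝ f y d₂) x u * fderiv ℝ g x d₁
        - fderiv ℝ f x d₂ * fderiv ℝ (fun y => fderiv ℝ g y d₁) x u := by
  have h1 := hasFDerivAt_fderiv_apply f hf x d₁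
  have h2 := hasFDerivAt_fderiv_apply g hg x d₂
  have h3 := hasFDerivAt_fderiv_apply f hf x d₂
  have h4 := hasFDerivAt_fderiv_apply g hg x d₁
  rw [HasFDerivAt.fderiv (f := fun y => fderiv ℝ f y d₁ * fderiv ℝ g y d₂
      - fderiv ℝ f y d₂ * fderiv ℝ g y d₁) ((h1.mul h2).sub (h3.mul h4))]
  simp only [ContinuousLinearMap.sub_apply, ContinuousLinearMap.add_apply,
    ContinuousLinearMap.smul_apply, ContinuousLinearMap.flip_apply, smul_eq_mul]
  rw [(h1.fderiv), (h2.fderiv), (h3.fderiv), (h4.fderiv)]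
  simp only [ContinuousLinearMap.flip_apply]
  ring

theorem fderiv_inv_mul (r c : E → ℝ) (hr : ContDiff ℝ (⊤ : ℕ∞) r) (hc : ContDiff ℝ (⊤ : ℕ∞) c)
    (hr0 : ∀ y, r y ≠ 0) (x u : E) :
    fderiv ℝ (fun y => (r y)⁻¹ * c y) x u
      = (r x)⁻¹ * fderiv ℝ c x u - (r x ^ 2)⁻¹ * fderiv ℝ r x u * c x := by
  have hrd : HasFDerivAt r (fderiv ℝ r x) x := (hr.differentiable (by simp) x).hasFDerivAt
  have hcd : HasFDerivAt c (fderiv ℝ c x) x := (hc.differentiable (by simp) x).hasFDerivAt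
  have hinv : HasFDerivAt (fun y => (r y)⁻¹)
      ((-ContinuousLinearMap.mulLeftRight ℝ ℝ (r x)⁻¹ (r x)⁻¹).comp (fderiv ℝ r x)) x :=
    (hasFDerivAt_inv' (hr0 x)).comp x hrd
  rw [HasFDerivAt.fderiv (f := fun y => (r y)⁻¹ * c y) (hinv.mul hcd)]
  simp only [ContinuousLinearMap.add_apply, ContinuousLinearMap.smul_apply, smul_eq_mul,
    ContinuousLinearMap.comp_apply, ContinuousLinearMap.neg_apply,
    ContinuousLinearMap.mulLeftRight_apply]
  field_simp
  ring

end Aux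

theorem e_decomp (w : Fin 3 → ℝ) : ∑ j, w j • e j = w := by
  funext i
  simp only [Finset.sum_apply, e, Pi.smul_apply, smul_eq_mul]
  fin_cases i <;> simp [Fin.sum_univ_three, Pi.single_apply]

theorem pair_decomp (w : Fin 3 → ℝ) :
    ((0 : ℝ), w) = ∑ j, w j • (((0 : ℝ), e j) : P) := by
  have h1 : (∑ j, w j • (((0 : ℝ), e j) : P)) = (∑ j, w j • (0:ℝ), ∑ j, w j • e j) := by
    simp [Prod.ext_iff, Prod.fst_sum, Prod.snd_sum]
  rw [h1, e_decomp]
  simp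

theorem fderiv_spatial_decomp (f : P → ℝ) (p : P) (w : Fin 3 → ℝ) :
    fderiv ℝ f p ((0 : ℝ), w) = ∑ j, w j * fderiv ℝ f p ((0 : ℝ), e j) := by
  rw [pair_decomp w, map_sum]
  simp only [_root_.map_smul, smul_eq_mul]

theorem slice_fderiv (f : P → ℝ) (hf : ContDiff ℝ (⊤ : ℕ∞) f) (c : ℝ) (x w : Fin 3 → ℝ) :
    fderiv ℝ (fun y => f (c, y)) x w = fderiv ℝ f (c, x) (0, w) := by
  have h1 : HasFDerivAt (fun y : Fin 3 → ℝ => (c, y))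
      ((0 : (Fin 3 → ℝ) →L[ℝ] ℝ).prod (ContinuousLinearMap.id ℝ (Fin 3 → ℝ))) x :=
    HasFDerivAt.prodMk (hasFDerivAt_const c x) (hasFDerivAt_id x)
  have h2 : HasFDerivAt f (fderiv ℝ f (c, x)) (c, x) :=
    (hf.differentiable (by simp) (c, x)).hasFDerivAt
  have h3 := (h2.comp x h1).fderiv
  show (fderiv ℝ (f ∘ (fun y => (c, y))) x) w = _
  rw [show (f ∘ fun y => (c, y)) = f ∘ Prod.mk c from rfl, h3]
  simp

theorem fderiv_comp_proj (u : P → (Fin 3 → ℝ)) {p : P} (hu : DifferentiableAt ℝ u p)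
    (w : P) (i : Fin 3) :
    fderiv ℝ u p w i = fderiv ℝ (fun q => u q i) p w := by
  have h1 := ((ContinuousLinearMap.proj (R := ℝ) (φ := fun _ : Fin 3 => ℝ)
      i).hasFDerivAt.comp p hu.hasFDerivAt).fderiv
  rw [show (fun q => u q i)
      = (⇑(ContinuousLinearMap.proj (R := ℝ) (φ := fun _ : Fin 3 => ℝ) i) ∘ u) from rfl, h1]
  rfl

theorem transport (v : P → Fin 3 → ℝ) (hv : ContDiff ℝ (⊤ : ℕ∞) v) (f : P → ℝ) (hf : ContDiff ℝ (⊤ : ℕ∞) f)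
    (hinv : ∀ q, fderiv ℝ f q (1, v q) = 0) (p : P) (j : Fin 3) :
    fderiv ℝ (fun q => fderiv ℝ f q ((0:ℝ), e j)) p (1, v p)
      = -∑ k, fderiv ℝ (fun q => v q k) p ((0:ℝ), e j) * fderiv ℝ f p ((0:ℝ), e k) := by
  rw [symm2 f hf p ((0:ℝ), e j) (1, v p)]
  have hvd : HasFDerivAt v (fderiv ℝ v p) p := (hv.differentiable (by simp) p).hasFDerivAt
  have hG : HasFDerivAt (fun q : P => ((1:ℝ), v q))
      ((0 : P →L[ℝ] ℝ).prod (fderiv ℝ v p)) p :=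
    HasFDerivAt.prodMk (hasFDerivAt_const (1:ℝ) p) hvd
  have hd2 : HasFDerivAt (fderiv ℝ f) (fderiv ℝ (fderiv ℝ f) p) p :=
    ((hf.fderiv_right (m := (⊤ : ℕ∞)) (by simp)).differentiable (by simp) p).hasFDerivAt
  have hΦd := hd2.clm_apply hG
  have hΦ0 : (fun q : P => fderiv ℝ f q (1, v q)) = fun _ : P => (0:ℝ) := funext hinv
  have hzero : fderiv ℝ (fun q : P => fderiv ℝ f q (1, v q)) p ((0:ℝ), e j) = 0 := by
    rw [hΦ0, fderiv_fun_const]; simp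
  rw [hΦd.fderiv] at hzero
  simp only [ContinuousLinearMap.add_apply, ContinuousLinearMap.comp_apply,
    ContinuousLinearMap.flip_apply, ContinuousLinearMap.prod_apply,
    ContinuousLinearMap.zero_apply] at hzero
  have hL : fderiv ℝ (fun q => fderiv ℝ f q (1, v p)) p ((0:ℝ), e j)
      = (fderiv ℝ (fderiv ℝ f) p ((0:ℝ), e j)) (1, v p) := by
    rw [(hasFDerivAt_fderiv_apply f hf p (1, v p)).fderiv]
    rfl
  rw [hL]
  have hlin := fderiv_spatial_decomp f p (fderiv ℝ v p ((0:ℝ), e j))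
  have hcomp : ∀ k, fderiv ℝ v p ((0:ℝ), e j) k
      = fderiv ℝ (fun q => v q k) p ((0:ℝ), e j) := fun k =>
    fderiv_comp_proj v (hv.differentiable (by simp) p) _ k
  rw [← sub_eq_zero]
  have hx : (fderiv ℝ (fderiv ℝ f) p ((0:ℝ), e j)) (1, v p)
      = - fderiv ℝ f p ((0:ℝ), fderiv ℝ v p ((0:ℝ), e j)) := by linarith [hzero]
  rw [hx, hlin]
  simp only [hcomp]
  ring

theorem div_cross_grad (F G : (Fin 3 → ℝ) → ℝ) (hF : ContDiff ℝ (⊤ : ℕ∞) F) (hG : ContDiff ℝ (⊤ : ℕ∞) G)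
    (x : Fin 3 → ℝ) :
    div3 (fun y => (fun j => fderiv ℝ F y (e j)) ⨯₃ (fun j => fderiv ℝ G y (e j))) x = 0 := by
  have hc0 : (fun y : Fin 3 → ℝ =>
      ((fun j => fderiv ℝ F y (e j)) ⨯₃ (fun j => fderiv ℝ G y (e j))) 0)
      = fun y => fderiv ℝ F y (e 1) * fderiv ℝ G y (e 2)
          - fderiv ℝ F y (e 2) * fderiv ℝ G y (e 1) := by
    funext y; simp [cross_apply]
  have hc1 : (fun y : Fin 3 → ℝ =>
      ((fun j => fderiv ℝ F y (e j)) ⨯₃ (fun j => fderiv ℝ G y (e j))) 1)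
      = fun y => fderiv ℝ F y (e 2) * fderiv ℝ G y (e 0)
          - fderiv ℝ F y (e 0) * fderiv ℝ G y (e 2) := by
    funext y; simp [cross_apply]
  have hc2 : (fun y : Fin 3 → ℝ =>
      ((fun j => fderiv ℝ F y (e j)) ⨯₃ (fun j => fderiv ℝ G y (e j))) 2)
      = fun y => fderiv ℝ F y (e 0) * fderiv ℝ G y (e 1)
          - fderiv ℝ F y (e 1) * fderiv ℝ G y (e 0) := by
    funext y; simp [cross_apply]
  unfold div3
  rw [Fin.sum_univ_three, hc0, hc1, hc2,
    fderiv_cross F G hF hG x (e 0) _ _, fderiv_cross F G hF hG x (e 1) _ _,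
    fderiv_cross F G hF hG x (e 2) _ _,
    symm2 F hF x (e 1) (e 0), symm2 F hF x (e 2) (e 0), symm2 F hF x (e 2) (e 1),
    symm2 G hG x (e 1) (e 0), symm2 G hG x (e 2) (e 0), symm2 G hG x (e 2) (e 1)]
  ring

theorem bracket_vanish
    (v : P → (Fin 3 → ℝ)) (φ h ρ : P → ℝ)
    (hv : ContDiff ℝ (⊤ : ℕ∞) v) (hφ : ContDiff ℝ (⊤ : ℕ∞) φ) (hh : ContDiff ℝ (⊤ : ℕ∞) h)
    (hρ : ContDiff ℝ (⊤ : ℕ∞) ρ) (hρ0 : ∀ p, ρ p ≠ 0)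
    (hdivv : ∀ p : P, div3 (fun y => v (p.1, y)) p.2 = 0)
    (hφinv : ∀ p : P, fderiv ℝ φ p (1, v p) = 0)
    (hhinv : ∀ p : P, fderiv ℝ h p (1, v p) = 0)
    (hρinv : ∀ p : P, fderiv ℝ ρ p (1, v p) = 0) (p : P) :
    lieBracketP (fun q => (1, v q))
      (fun q => (0, (ρ q)⁻¹ • (gradx φ q ⨯₃ gradx h q))) p = 0 := by
  have hvdiff : Differentiable ℝ v := hv.differentiable (by simp)
  have hA : ∀ j : Fin 3, ContDiff ℝ (⊤ : ℕ∞) (fun q : P => fderiv ℝ φ q ((0:ℝ), e j)) :=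
    fun j => contDiff_fderiv_apply φ hφ _
  have hB : ∀ j : Fin 3, ContDiff ℝ (⊤ : ℕ∞) (fun q : P => fderiv ℝ h q ((0:ℝ), e j)) :=
    fun j => contDiff_fderiv_apply h hh _
  set W : P → Fin 3 → ℝ := fun q =>
    (ρ q)⁻¹ • ((fun i => fderiv ℝ φ q ((0:ℝ), e i)) ⨯₃ (fun i => fderiv ℝ h q ((0:ℝ), e i)))
    with hWdef
  have hcrossi : ∀ (x y : Fin 3 → ℝ) (i : Fin 3),
      (x ⨯₃ y) i = x (i+1) * y (i+2) - x (i+2) * y (i+1) := by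
    intro x y i; fin_cases i <;> simp [cross_apply]
  have hWi : ∀ i : Fin 3, (fun q => W q i) = fun q => (ρ q)⁻¹ *
      (fderiv ℝ φ q ((0:ℝ), e (i+1)) * fderiv ℝ h q ((0:ℝ), e (i+2))
        - fderiv ℝ φ q ((0:ℝ), e (i+2)) * fderiv ℝ h q ((0:ℝ), e (i+1))) := by
    intro i; funext q
    simp only [hWdef, Pi.smul_apply, smul_eq_mul, hcrossi]
  have hWci : ∀ i : Fin 3, ContDiff ℝ (⊤ : ℕ∞) (fun q => W q i) := by
    intro i
    rw [hWi i]
    exact (hρ.inv hρ0).mul (((hA _).mul (hB _)).sub ((hA _).mul (hB _)))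
  have hWd : DifferentiableAt ℝ W p :=
    differentiableAt_pi.mpr fun i => ((hWci i).differentiable (by simp)).differentiableAt
  -- rewrite the vector field G into W form
  have hgrad : ∀ (f : P → ℝ), ContDiff ℝ (⊤ : ℕ∞) f → ∀ q : P,
      gradx f q = fun i => fderiv ℝ f q ((0:ℝ), e i) := by
    intro f hf q; funext i
    show fderiv ℝ (fun y => f (q.1, y)) q.2 (e i) = _
    rw [slice_fderiv f hf q.1 q.2 (e i)]
  have hGfun : (fun q : P => ((0:ℝ), (ρ q)⁻¹ • (gradx φ q ⨯₃ gradx h q)))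
      = fun q : P => ((0:ℝ), W q) := by
    funext q
    rw [Prod.mk.injEq]
    exact ⟨rfl, by rw [hWdef, hgrad φ hφ q, hgrad h hh q]⟩
  rw [show lieBracketP (fun q => (1, v q))
        (fun q => (0, (ρ q)⁻¹ • (gradx φ q ⨯₃ gradx h q))) p
      = fderiv ℝ (fun q : P => ((0:ℝ), (ρ q)⁻¹ • (gradx φ q ⨯₃ gradx h q))) p (1, v p)
        - fderiv ℝ (fun q : P => ((1:ℝ), v q)) p
            ((0:ℝ), (ρ p)⁻¹ • (gradx φ p ⨯₃ gradx h p)) from rfl]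
  rw [hGfun]
  have hGp : ((0:ℝ), (ρ p)⁻¹ • (gradx φ p ⨯₃ gradx h p)) = ((0:ℝ), W p) := by
    rw [Prod.mk.injEq]; exact ⟨rfl, by rw [hWdef, hgrad φ hφ p, hgrad h hh p]⟩
  rw [hGp]
  have hFd : HasFDerivAt (fun q : P => ((1:ℝ), v q))
      ((0 : P →L[ℝ] ℝ).prod (fderiv ℝ v p)) p :=
    HasFDerivAt.prodMk (hasFDerivAt_const (1:ℝ) p) (hvdiff p).hasFDerivAt
  have hGd : HasFDerivAt (fun q : P => ((0:ℝ), W q))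
      ((0 : P →L[ℝ] ℝ).prod (fderiv ℝ W p)) p :=
    HasFDerivAt.prodMk (hasFDerivAt_const (0:ℝ) p) hWd.hasFDerivAt
  rw [hFd.fderiv, hGd.fderiv]
  simp only [ContinuousLinearMap.prod_apply, ContinuousLinearMap.zero_apply]
  rw [Prod.mk_sub_mk, sub_zero, Prod.mk_eq_zero]
  refine ⟨rfl, ?_⟩
  rw [sub_eq_zero]
  funext i
  rw [fderiv_comp_proj W hWd _ i, fderiv_comp_proj v (hvdiff p) _ i, hWi i]
  -- trace condition
  have htr : fderiv ℝ (fun q => v q 0) p ((0:ℝ), e 0)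
      + fderiv ℝ (fun q => v q 1) p ((0:ℝ), e 1)
      + fderiv ℝ (fun q => v q 2) p ((0:ℝ), e 2) = 0 := by
    have hd := hdivv p
    unfold div3 at hd
    rw [Fin.sum_univ_three] at hd
    rw [slice_fderiv (fun q => v q 0) (contDiff_pi.mp hv 0) p.1 p.2 (e 0),
      slice_fderiv (fun q => v q 1) (contDiff_pi.mp hv 1) p.1 p.2 (e 1),
      slice_fderiv (fun q => v q 2) (contDiff_pi.mp hv 2) p.1 p.2 (e 2)] at hd
    simpa using hd
  -- transport of gradient components
  have hTφ := transport v hv φ hφ hφinv p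
  have hTh := transport v hv h hh hhinv p
  simp only [Fin.sum_univ_three] at hTφ hTh
  -- expand LHS via product/quotient rule
  rw [fderiv_inv_mul ρ _ hρ
      ((((hA (i+1)).mul (hB (i+2)))).sub ((hA (i+2)).mul (hB (i+1)))) hρ0 p (1, v p),
    hρinv p]
  rw [fderiv_cross φ h hφ hh p (1, v p) ((0:ℝ), e (i+1)) ((0:ℝ), e (i+2))]
  -- expand RHS
  rw [fderiv_spatial_decomp (fun q => v q i) p (W p), Fin.sum_univ_three]
  have hWp : ∀ j : Fin 3, W p j = (ρ p)⁻¹ *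
      (fderiv ℝ φ p ((0:ℝ), e (j+1)) * fderiv ℝ h p ((0:ℝ), e (j+2))
        - fderiv ℝ φ p ((0:ℝ), e (j+2)) * fderiv ℝ h p ((0:ℝ), e (j+1))) :=
    fun j => congrFun (hWi j) p
  rw [hWp 0, hWp 1, hWp 2, hTφ (i+1), hTφ (i+2), hTh (i+1), hTh (i+2)]
  fin_cases i
  · simp only [show ((⟨0, by omega⟩ : Fin 3)) = 0 from rfl,
      show ((0:Fin 3)+1) = 1 from rfl, show ((0:Fin 3)+2) = 2 from rfl,
      show ((1:Fin 3)+1) = 2 from rfl, show ((1:Fin 3)+2) = 0 from rfl,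
      show ((2:Fin 3)+1) = 0 from rfl, show ((2:Fin 3)+2) = 1 from rfl]
    linear_combination (-( (ρ p)⁻¹ *
      (fderiv ℝ φ p ((0:ℝ), e 1) * fderiv ℝ h p ((0:ℝ), e 2)
        - fderiv ℝ φ p ((0:ℝ), e 2) * fderiv ℝ h p ((0:ℝ), e 1)))) * htr
  · simp only [show ((⟨1, by omega⟩ : Fin 3)) = 1 from rfl,
      show ((0:Fin 3)+1) = 1 from rfl, show ((0:Fin 3)+2) = 2 from rfl,
      show ((1:Fin 3)+1) = 2 from rfl, show ((1:Fin 3)+2) = 0 from rfl,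
      show ((2:Fin 3)+1) = 0 from rfl, show ((2:Fin 3)+2) = 1 from rfl]
    linear_combination (-( (ρ p)⁻¹ *
      (fderiv ℝ φ p ((0:ℝ), e 2) * fderiv ℝ h p ((0:ℝ), e 0)
        - fderiv ℝ φ p ((0:ℝ), e 0) * fderiv ℝ h p ((0:ℝ), e 2)))) * htr
  · simp only [show ((⟨2, by omega⟩ : Fin 3)) = 2 from rfl,
      show ((0:Fin 3)+1) = 1 from rfl, show ((0:Fin 3)+2) = 2 from rfl,
      show ((1:Fin 3)+1) = 2 from rfl, show ((1:Fin 3)+2) = 0 from rfl,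
      show ((2:Fin 3)+1) = 0 from rfl, show ((2:Fin 3)+2) = 1 from rfl]
    linear_combination (-( (ρ p)⁻¹ *
      (fderiv ℝ φ p ((0:ℝ), e 0) * fderiv ℝ h p ((0:ℝ), e 1)
        - fderiv ℝ φ p ((0:ℝ), e 1) * fderiv ℝ h p ((0:ℝ), e 0)))) * htr

/-- If φ, h, ρ are Lagrangian invariants of a divergence-free field v (with ρ
nonvanishing), then W = ρ⁻¹ (∇φ × ∇h) commutes with ∂ₜ + v and has vanishing
ρ-weighted divergence ρ⁻¹ ∇ ⋅ (ρ W) = 0. -/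
theorem relabelling_field_properties
    (v : P → (Fin 3 → ℝ)) (φ h ρ : P → ℝ)
    (hv : ContDiff ℝ (⊤ : ℕ∞) v) (hφ : ContDiff ℝ (⊤ : ℕ∞) φ) (hh : ContDiff ℝ (⊤ : ℕ∞) h)
    (hρ : ContDiff ℝ (⊤ : ℕ∞) ρ) (hρ0 : ∀ p, ρ p ≠ 0)
    (hdivv : ∀ p : P, div3 (fun y => v (p.1, y)) p.2 = 0)
    (hφinv : ∀ p : P, fderiv ℝ φ p (1, v p) = 0)
    (hhinv : ∀ p : P, fderiv ℝ h p (1, v p) = 0)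
    (hρinv : ∀ p : P, fderiv ℝ ρ p (1, v p) = 0) :
    (∀ p : P,
      lieBracketP (fun q => (1, v q))
        (fun q => (0, (ρ q)⁻¹ • (gradx φ q ⨯₃ gradx h q))) p = 0) ∧
    (∀ p : P,
      (ρ p)⁻¹ *
        div3 (fun y => ρ (p.1, y) •
          ((ρ (p.1, y))⁻¹ • (gradx φ (p.1, y) ⨯₃ gradx h (p.1, y)))) p.2 = 0) := by
  refine ⟨fun p => bracket_vanish v φ h ρ hv hφ hh hρ hρ0 hdivv hφinv hhinv hρinv p,
    fun p => ?_⟩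
  have hF : ContDiff ℝ (⊤ : ℕ∞) (fun y => φ (p.1, y)) := hφ.comp (contDiff_const.prodMk contDiff_id)
  have hG : ContDiff ℝ (⊤ : ℕ∞) (fun y => h (p.1, y)) := hh.comp (contDiff_const.prodMk contDiff_id)
  have hfun : (fun y => ρ (p.1, y) •
        ((ρ (p.1, y))⁻¹ • (gradx φ (p.1, y) ⨯₃ gradx h (p.1, y))))
      = fun y => (fun j => fderiv ℝ (fun z => φ (p.1, z)) y (e j))
          ⨯₃ (fun j => fderiv ℝ (fun z => h (p.1, z)) y (e j)) := by
    funext y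
    rw [smul_smul, mul_inv_cancel₀ (hρ0 _), one_smul]
    rfl
  rw [hfun, div_cross_grad _ _ hF hG, mul_zero]
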